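/- Let p be an odd prime, α ≥ 1 a natural number, and n = p^α. Then the Sombor index of the total graph of ℤ_n satisfies SO(T_Γ(ℤ_n)) = φ(n)(n − φ(n))²/√2 + (n − φ(n) − 1)²(n − φ(n))/√2, where φ is Euler's totient function. -/

import Mathlib

open scoped Classical

/-- The total graph of a commutative ring `R`: distinct `x`, `y` are adjacent
iff `x + y` is not a unit of `R`. -/
def totalGraph (R : Type*) [CommRing R] : SimpleGraph R where
  Adj x y := x ≠ y ∧ ¬ IsUnit (x + y)
  symm := ⟨fun x y ⟨h1, h2⟩ => ⟨h1.symm, by rwa [add_comm]⟩⟩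
  loopless := ⟨fun x h => h.1 rfl⟩

/-- The unit graph of a commutative ring `R`: distinct `x`, `y` are adjacent
iff `x + y` is a unit of `R`. -/
def unitGraph (R : Type*) [CommRing R] : SimpleGraph R where
  Adj x y := x ≠ y ∧ IsUnit (x + y)
  symm := ⟨fun x y ⟨h1, h2⟩ => ⟨h1.symm, by rwa [add_comm]⟩⟩
  loopless := ⟨fun x h => h.1 rfl⟩

/-- The Sombor index of a finite simple graph:
`SO(G) = ∑_{uv ∈ E(G)} √(deg u ^ 2 + deg v ^ 2)`. -/
noncomputable def somborIndex {V : Type*} [Fintype V] (G : SimpleGraph V) : ℝ :=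
  ∑ e ∈ G.edgeFinset,
    Sym2.lift ⟨fun u v => Real.sqrt ((G.degree u : ℝ) ^ 2 + (G.degree v : ℝ) ^ 2),
      fun u v => by dsimp only; rw [add_comm]⟩ e

section Aux

open Finset SimpleGraph

lemma sum_darts_edge {V : Type*} [Fintype V] (G : SimpleGraph V) (g : Sym2 V → ℝ) :
    ∑ d : G.Dart, g d.edge = 2 * ∑ e ∈ G.edgeFinset, g e := by
  classical
  rw [← Finset.sum_fiberwise_of_maps_to (t := G.edgeFinset) (g := fun d : G.Dart => d.edge)
    (fun d _ => by simp [SimpleGraph.mem_edgeFinset, d.edge_mem]) (fun d => g d.edge),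
    Finset.mul_sum]
  refine Finset.sum_congr rfl fun e he => ?_
  rw [Finset.sum_congr rfl (fun d hd => by rw [(Finset.mem_filter.mp hd).2]),
    Finset.sum_const, G.dart_edge_fiber_card e (SimpleGraph.mem_edgeFinset.mp he),
    nsmul_eq_mul]
  norm_num

lemma sum_darts_fst {V : Type*} [Fintype V] (G : SimpleGraph V) (h : V → ℝ) :
    ∑ d : G.Dart, h d.fst = ∑ v, (G.degree v : ℝ) * h v := by
  classical
  rw [← Finset.sum_fiberwise_of_maps_to (t := Finset.univ) (g := fun d : G.Dart => d.fst)
    (fun d _ => Finset.mem_univ _) (fun d => h d.fst)]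
  refine Finset.sum_congr rfl fun v _ => ?_
  rw [Finset.sum_congr rfl (fun d hd => by rw [(Finset.mem_filter.mp hd).2]),
    Finset.sum_const, nsmul_eq_mul]
  congr 1
  exact_mod_cast congrArg Nat.cast (G.dart_fst_fiber_card_eq_degree v)

lemma zmod_unit_iff (p α : ℕ) [Fact p.Prime] (h : p ∣ p ^ α) (hα : 1 ≤ α) (x : ZMod (p ^ α)) :
    IsUnit x ↔ ZMod.castHom h (ZMod p) x ≠ 0 := by
  haveI : NeZero (p ^ α) := ⟨pow_ne_zero _ (Fact.out (p := p.Prime)).ne_zero⟩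
  rw [ZMod.castHom_apply, ← ZMod.natCast_val, Ne, ZMod.natCast_eq_zero_iff]
  conv_lhs => rw [← ZMod.natCast_zmod_val x]
  rw [ZMod.isUnit_iff_coprime, Nat.coprime_pow_right_iff (by omega), Nat.coprime_comm,
    Nat.Prime.coprime_iff_not_dvd (Fact.out)]

lemma card_isUnit_filter (n : ℕ) [NeZero n] :
    (Finset.univ.filter (fun x : ZMod n => IsUnit x)).card = Nat.totient n := by
  rw [← ZMod.card_units_eq_totient n, ← Fintype.card_subtype]
  exact Fintype.card_congr
    ⟨fun s => s.2.unit, fun u => ⟨u, u.isUnit⟩,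
      fun s => Subtype.ext s.2.unit_spec, fun u => Units.ext (IsUnit.unit_spec _)⟩

end Aux

open Finset SimpleGraph in
theorem sombor_total_graph_odd_prime_power (p α : ℕ) [Fact p.Prime] (hp : Odd p)
    (hα : 1 ≤ α) :
    somborIndex (totalGraph (ZMod (p ^ α))) =
      (Nat.totient (p ^ α) : ℝ) * ((p ^ α : ℝ) - (Nat.totient (p ^ α) : ℝ)) ^ 2 / Real.sqrt 2 +
        ((p ^ α : ℝ) - (Nat.totient (p ^ α) : ℝ) - 1) ^ 2 *
          ((p ^ α : ℝ) - (Nat.totient (p ^ α) : ℝ)) / Real.sqrt 2 := by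
  haveI : NeZero (p ^ α) := ⟨pow_ne_zero _ (Fact.out (p := p.Prime)).ne_zero⟩
  have hppos : 0 < p := (Fact.out (p := p.Prime)).pos
  set G := totalGraph (ZMod (p ^ α)) with hG
  have hdvd : p ∣ p ^ α := dvd_pow_self p (by omega)
  set m : ℕ := p ^ (α - 1) with hmdef
  have hm1 : 1 ≤ m := Nat.one_le_iff_ne_zero.mpr (pow_ne_zero _ (by omega))
  -- key numeric identity
  have hkey : m + Nat.totient (p ^ α) = p ^ α := by
    rw [Nat.totient_prime_pow Fact.out (by omega : 0 < α)]
    obtain ⟨k, rfl⟩ : ∃ k, p = k + 1 := ⟨p - 1, by omega⟩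
    have hpow : (k + 1) ^ α = (k + 1) ^ (α - 1) * (k + 1) := by
      rw [← pow_succ]; congr 1; omega
    rw [hpow, hmdef]
    simp only [Nat.add_sub_cancel]
    ring
  have h2unit : IsUnit (2 : ZMod (p ^ α)) := by
    have h2 : ((2 : ℕ) : ZMod (p ^ α)) = 2 := by norm_cast
    rw [← h2, ZMod.isUnit_iff_coprime]
    exact Nat.Coprime.pow_right _ (Nat.coprime_two_left.mpr hp)
  have hScard : (univ.filter fun z : ZMod (p ^ α) => ¬ IsUnit z).card = m := by
    have h1 := card_isUnit_filter (p ^ α)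
    have h2 := Finset.card_filter_add_card_filter_not
      (s := (univ : Finset (ZMod (p ^ α)))) (p := fun z => IsUnit z)
    rw [Finset.card_univ, ZMod.card] at h2
    omega
  have hsame : ∀ x y : ZMod (p ^ α), ¬ IsUnit (x + y) → (IsUnit x ↔ IsUnit y) := by
    intro x y hxy
    have h0 : ZMod.castHom hdvd (ZMod p) x + ZMod.castHom hdvd (ZMod p) y = 0 := by
      rw [← map_add]
      exact not_not.mp (fun hc => hxy ((zmod_unit_iff p α hdvd hα (x + y)).mpr hc))
    rw [zmod_unit_iff p α hdvd hα x, zmod_unit_iff p α hdvd hα y]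
    constructor
    · intro h hc; rw [hc, add_zero] at h0; exact h h0
    · intro h hc; rw [hc, zero_add] at h0; exact h h0
  -- degree formula
  have hdeg : ∀ x : ZMod (p ^ α), G.degree x = if IsUnit x then m else m - 1 := by
    intro x
    have hb : G.degree x =
        ((univ.filter fun z : ZMod (p ^ α) => ¬ IsUnit z).erase (2 * x)).card := by
      rw [← card_neighborFinset_eq_degree]
      refine Finset.card_bij' (fun y _ => x + y) (fun z _ => z - x) ?_ ?_ ?_ ?_
      · intro y hy
        rw [mem_neighborFinset] at hy
        obtain ⟨hne, hnu⟩ := hy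
        refine Finset.mem_erase.mpr ⟨?_, ?_⟩
        · intro hc
          exact hne ((add_left_cancel (hc.trans (two_mul x))).symm)
        · simp only [mem_filter]; exact ⟨mem_univ _, hnu⟩
      · intro z hz
        rw [Finset.mem_erase, mem_filter] at hz
        obtain ⟨hz2, _, hznu⟩ := hz
        rw [mem_neighborFinset]
        refine ⟨?_, by rwa [add_sub_cancel]⟩
        intro hc
        exact hz2 (by linear_combination -hc)
      · intro y _; simp
      · intro z _; simp
    by_cases hx : IsUnit x
    · rw [hb, Finset.erase_eq_of_notMem, hScard, if_pos hx]
      simp only [mem_filter, not_and, not_not]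
      intro _
      exact h2unit.mul hx
    · rw [hb, Finset.card_erase_of_mem, hScard, if_neg hx]
      simp only [mem_filter, mem_univ, true_and, not_not]
      intro h
      exact hx (isUnit_of_mul_isUnit_right h)
  -- edge weight on darts
  have habs : ∀ c : ℝ, 0 ≤ c → Real.sqrt (c ^ 2 + c ^ 2) = Real.sqrt 2 * c := by
    intro c hc
    rw [← two_mul, Real.sqrt_mul (by norm_num), Real.sqrt_sq hc]
  have hdart : ∀ d : G.Dart,
      Sym2.lift ⟨fun u v => Real.sqrt ((G.degree u : ℝ) ^ 2 + (G.degree v : ℝ) ^ 2),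
        fun u v => by dsimp only; rw [add_comm]⟩ d.edge
      = Real.sqrt 2 * (G.degree d.fst : ℝ) := by
    rintro ⟨⟨a, b⟩, hab⟩
    have hadj : a ≠ b ∧ ¬ IsUnit (a + b) := by rw [hG] at hab; exact hab
    have hdd : G.degree b = G.degree a := by
      rw [hdeg a, hdeg b]
      by_cases h : IsUnit a
      · rw [if_pos h, if_pos ((hsame a b hadj.2).mp h)]
      · rw [if_neg h, if_neg (fun hb' => h ((hsame a b hadj.2).mpr hb'))]
    show Real.sqrt ((G.degree a : ℝ) ^ 2 + (G.degree b : ℝ) ^ 2) = _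
    rw [hdd]
    exact habs _ (Nat.cast_nonneg _)
  -- assemble
  have hE : 2 * somborIndex G
      = ∑ v : ZMod (p ^ α), (G.degree v : ℝ) * (Real.sqrt 2 * (G.degree v : ℝ)) := by
    rw [somborIndex, ← sum_darts_edge, Finset.sum_congr rfl (fun d _ => hdart d)]
    exact sum_darts_fst G (fun v => Real.sqrt 2 * (G.degree v : ℝ))
  have h3 : ∑ v : ZMod (p ^ α), (G.degree v : ℝ) * (Real.sqrt 2 * (G.degree v : ℝ))
      = (Nat.totient (p ^ α) : ℝ) * ((m : ℝ) * (Real.sqrt 2 * (m : ℝ)))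
        + (m : ℝ) * (((m : ℝ) - 1) * (Real.sqrt 2 * ((m : ℝ) - 1))) := by
    rw [← Finset.sum_filter_add_sum_filter_not univ (fun v : ZMod (p ^ α) => IsUnit v)]
    congr 1
    · rw [Finset.sum_congr rfl
        (fun v hv => by rw [hdeg v, if_pos (Finset.mem_filter.mp hv).2]),
        Finset.sum_const, card_isUnit_filter, nsmul_eq_mul]
    · rw [Finset.sum_congr rfl
        (fun v hv => by rw [hdeg v, if_neg (Finset.mem_filter.mp hv).2]),
        Finset.sum_const, hScard, nsmul_eq_mul, Nat.cast_sub hm1, Nat.cast_one]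
  have hmr : (p ^ α : ℝ) - (Nat.totient (p ^ α) : ℝ) = (m : ℝ) := by
    have h : ((m : ℝ) + (Nat.totient (p ^ α) : ℝ)) = (p : ℝ) ^ α := by
      exact_mod_cast hkey
    linarith
  rw [hmr]
  have hs2 : Real.sqrt 2 * Real.sqrt 2 = 2 := Real.mul_self_sqrt (by norm_num)
  have hs0 : Real.sqrt 2 ≠ 0 := by positivity
  have hEq := hE.trans h3
  rw [← add_div, eq_div_iff hs0]
  linear_combination (Real.sqrt 2 / 2) * hEq +
    (((Nat.totient (p ^ α) : ℝ) * (m : ℝ) ^ 2 + ((m : ℝ) - 1) ^ 2 * (m : ℝ)) / 2) * hs2
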